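/- Well-posedness of the mixed-dimensional weak formulation: there exists a unique pair (q, p) ∈ H_0(div,𝔅) × L²(𝔅) satisfying (q, v)_{K^{-1}} − (p, 𝔇·v) = 0 for all v ∈ H_0(div,𝔅) and −(𝔇·q, w) = −(r, w) for all w ∈ L²(𝔅), with stability bound ‖q‖_{H(div,𝔅)} + ‖p‖_{L²(𝔅)} ≤ C ‖r‖_{L²(𝔅)}. -/

import Mathlib

/-!
The inf-sup condition says exactly that `Bᵀ : Q → V`, `⟪Bᵀ w, v⟫ = b v w`, is bounded below by
`β`. Then `B Bᵀ` is coercive, so every `r` is represented as `b q₀ · = ⟪r, ·⟫` with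
`β ‖q₀‖ ≤ ‖r‖`, and `Bᵀ` has closed range, equal to `(ker B)ᗮ`. Correcting `q₀` by the
Lax–Milgram solution on `ker B` gives `q` with `a q ·` vanishing on `ker B`, so `a q · = b · p`
for some `p`. Coercivity on `ker B`, applied to `q - q₀`, and the inf-sup condition, applied to
`p`, bound every solution by `‖r‖`; by linearity this bound also gives uniqueness.
-/

open ContinuousLinearMap InnerProductSpace RealInnerProductSpace
open scoped InnerProduct

section BoundedBelow

variable {E F : Type*} [NormedAddCommGroup E] [InnerProductSpace ℝ E] [CompleteSpace E]
  [NormedAddCommGroup F] [InnerProductSpace ℝ F] [CompleteSpace F]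
  {S : F →L[ℝ] E} {β : ℝ}

theorem mul_norm_le_norm_adjoint_apply_self (hβ : 0 ≤ β) (hS : ∀ w, β * ‖w‖ ≤ ‖S w‖)
    (p : F) : β * ‖S p‖ ≤ ‖(S†) (S p)‖ := by
  rcases (norm_nonneg (S p)).eq_or_lt with h0 | hpos
  · rw [← h0, mul_zero]; exact norm_nonneg _
  refine le_of_mul_le_mul_right ?_ hpos
  calc β * ‖S p‖ * ‖S p‖ = β * ⟪(S†) (S p), p⟫_ℝ := by
        rw [adjoint_inner_left, real_inner_self_eq_norm_mul_norm, mul_assoc]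
    _ ≤ β * (‖(S†) (S p)‖ * ‖p‖) := by gcongr; exact real_inner_le_norm _ _
    _ = ‖(S†) (S p)‖ * (β * ‖p‖) := by ring
    _ ≤ ‖(S†) (S p)‖ * ‖S p‖ := by gcongr; exact hS p

theorem surjective_adjoint_comp_self (hβ : 0 < β) (hS : ∀ w, β * ‖w‖ ≤ ‖S w‖) :
    Function.Surjective (S† ∘L S) := by
  have hcoer : IsCoercive ((innerSL ℝ).bilinearComp S S) := by
    refine ⟨β * β, mul_pos hβ hβ, fun w => ?_⟩
    calc β * β * ‖w‖ * ‖w‖ = (β * ‖w‖) * (β * ‖w‖) := by ring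
      _ ≤ ‖S w‖ * ‖S w‖ := by have := hS w; gcongr
      _ = _ := by simp [← sq]
  have hrep : continuousLinearMapOfBilin ((innerSL ℝ).bilinearComp S S) = S† ∘L S := by
    ext p
    refine ext_inner_right ℝ fun w => ?_
    simp [continuousLinearMapOfBilin_apply, adjoint_inner_left]
  rw [← hrep]
  exact LinearMap.range_eq_top.mp hcoer.range_eq_top

theorem range_eq_orthogonal_ker_adjoint (hβ : 0 < β) (hS : ∀ w, β * ‖w‖ ≤ ‖S w‖) :
    S.range = (S†).kerᗮ := by
  have hanti : AntilipschitzWith (Real.toNNReal β⁻¹) S := by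
    refine S.antilipschitz_of_bound fun w => ?_
    rw [Real.coe_toNNReal _ (inv_nonneg.mpr hβ.le), inv_mul_eq_div, le_div_iff₀ hβ, mul_comm]
    exact hS w
  rw [orthogonal_ker, adjoint_adjoint]
  refine (IsClosed.submodule_topologicalClosure_eq (s := S.range) ?_).symm
  rw [LinearMap.coe_range, coe_coe]
  exact hanti.isClosed_range S.uniformContinuous

end BoundedBelow

theorem exists_mem_forall_apply_eq_of_coercive_on {E : Type*} [NormedAddCommGroup E]
    [InnerProductSpace ℝ E] (Z : Submodule ℝ E) [CompleteSpace Z]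
    (a : E →L[ℝ] E →L[ℝ] ℝ) {α : ℝ} (hα : 0 < α) (hcoer : ∀ v ∈ Z, α * ‖v‖ ^ 2 ≤ a v v)
    (ℓ : E →L[ℝ] ℝ) : ∃ z ∈ Z, ∀ v ∈ Z, a z v = ℓ v := by
  have hZ : IsCoercive (a.bilinearComp Z.subtypeL Z.subtypeL) :=
    ⟨α, hα, fun u => by simpa [mul_assoc, ← sq] using hcoer u u.2⟩
  set z := hZ.continuousLinearEquivOfBilin.symm ((toDual ℝ Z).symm (ℓ ∘L Z.subtypeL))
  refine ⟨z, z.2, fun v hv => ?_⟩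
  have := hZ.continuousLinearEquivOfBilin_apply z ⟨v, hv⟩
  simp only [z, ContinuousLinearEquiv.apply_symm_apply, toDual_symm_apply] at this
  simpa using this.symm

theorem mul_norm_le_opNorm_of_mul_sq_le {E : Type*} [NormedAddCommGroup E]
    [NormedSpace ℝ E] {α : ℝ} {e : E} (ℓ : E →L[ℝ] ℝ) (h : α * ‖e‖ ^ 2 ≤ ℓ e) :
    α * ‖e‖ ≤ ‖ℓ‖ := by
  rcases (norm_nonneg e).eq_or_lt with h0 | hpos
  · rw [← h0, mul_zero]; exact norm_nonneg ℓ
  refine le_of_mul_le_mul_right ?_ hpos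
  calc α * ‖e‖ * ‖e‖ = α * ‖e‖ ^ 2 := by ring
    _ ≤ ℓ e := h
    _ ≤ ‖ℓ‖ * ‖e‖ := (Real.le_norm_self _).trans (ℓ.le_opNorm e)

section SolvesSaddlePoint

variable {V Q : Type*} [NormedAddCommGroup V] [NormedSpace ℝ V]
  [NormedAddCommGroup Q] [InnerProductSpace ℝ Q]

def SolvesSaddlePoint (a : V →L[ℝ] V →L[ℝ] ℝ) (b : V →L[ℝ] Q →L[ℝ] ℝ) (r : Q) (qp : V × Q) :
    Prop :=
  (∀ v : V, a qp.1 v - b v qp.2 = 0) ∧ (∀ w : Q, b qp.1 w = ⟪r, w⟫_ℝ)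

variable {a : V →L[ℝ] V →L[ℝ] ℝ} {b : V →L[ℝ] Q →L[ℝ] ℝ} {r r₁ r₂ : Q} {qp qp₁ qp₂ : V × Q}

theorem SolvesSaddlePoint.sub (h₁ : SolvesSaddlePoint a b r₁ qp₁)
    (h₂ : SolvesSaddlePoint a b r₂ qp₂) : SolvesSaddlePoint a b (r₁ - r₂) (qp₁ - qp₂) := by
  refine ⟨fun v => ?_, fun w => ?_⟩
  · have e₁ := h₁.1 v
    have e₂ := h₂.1 v
    simp only [Prod.fst_sub, Prod.snd_sub, map_sub, sub_apply]
    linarith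
  · simp only [Prod.fst_sub, map_sub, sub_apply, h₁.2 w, h₂.2 w, inner_sub_left]

theorem SolvesSaddlePoint.mul_norm_snd_le {β : ℝ}
    (hinfsup : ∀ w : Q, ∃ v : V, ‖v‖ ≤ 1 ∧ β * ‖w‖ ≤ b v w) (h : SolvesSaddlePoint a b r qp) :
    β * ‖qp.2‖ ≤ ‖a‖ * ‖qp.1‖ := by
  obtain ⟨v, hv, hbv⟩ := hinfsup qp.2
  calc β * ‖qp.2‖ ≤ b v qp.2 := hbv
    _ = a qp.1 v := (sub_eq_zero.mp (h.1 v)).symm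
    _ ≤ ‖a qp.1‖ * ‖v‖ := (Real.le_norm_self _).trans ((a qp.1).le_opNorm v)
    _ ≤ ‖a qp.1‖ := mul_le_of_le_one_right (norm_nonneg _) hv
    _ ≤ ‖a‖ * ‖qp.1‖ := a.le_opNorm qp.1

end SolvesSaddlePoint

section SaddlePoint

variable {V Q : Type*} [NormedAddCommGroup V] [InnerProductSpace ℝ V] [CompleteSpace V]
  [NormedAddCommGroup Q] [InnerProductSpace ℝ Q]
  {a : V →L[ℝ] V →L[ℝ] ℝ} {b : V →L[ℝ] Q →L[ℝ] ℝ} {α β : ℝ} {r : Q} {qp qp' : V × Q}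

noncomputable def rieszFlip (b : V →L[ℝ] Q →L[ℝ] ℝ) : Q →L[ℝ] V :=
  ((toDual ℝ V).symm.toContinuousLinearEquiv : (V →L[ℝ] ℝ) ≃L[ℝ] V).toContinuousLinearMap ∘L
    b.flip

theorem inner_rieszFlip_apply (w : Q) (v : V) : ⟪rieszFlip b w, v⟫_ℝ = b v w := by
  simp [rieszFlip]

theorem mul_norm_le_norm_rieszFlip (hinfsup : ∀ w : Q, ∃ v : V, ‖v‖ ≤ 1 ∧ β * ‖w‖ ≤ b v w)
    (w : Q) : β * ‖w‖ ≤ ‖rieszFlip b w‖ := by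
  obtain ⟨v, hv, hbv⟩ := hinfsup w
  calc β * ‖w‖ ≤ b v w := hbv
    _ = ⟪rieszFlip b w, v⟫_ℝ := (inner_rieszFlip_apply w v).symm
    _ ≤ ‖rieszFlip b w‖ * ‖v‖ := real_inner_le_norm _ _
    _ ≤ ‖rieszFlip b w‖ := mul_le_of_le_one_right (norm_nonneg _) hv

variable [CompleteSpace Q]

theorem inner_adjoint_rieszFlip_apply (v : V) (w : Q) :
    ⟪((rieszFlip b)†) v, w⟫_ℝ = b v w := by
  rw [adjoint_inner_left, real_inner_comm, inner_rieszFlip_apply]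

theorem mem_ker_adjoint_rieszFlip {v : V} : v ∈ ((rieszFlip b)†).ker ↔ ∀ w, b v w = 0 := by
  simp_rw [LinearMap.mem_ker, coe_coe, ← inner_adjoint_rieszFlip_apply v]
  exact ⟨fun h w => by rw [h, inner_zero_left],
    fun h => ext_inner_right ℝ fun w => by rw [h, inner_zero_left]⟩

theorem exists_forall_apply_eq_inner (hβ : 0 < β)
    (hinfsup : ∀ w : Q, ∃ v : V, ‖v‖ ≤ 1 ∧ β * ‖w‖ ≤ b v w) (r : Q) :
    ∃ q₀ : V, (∀ w, b q₀ w = ⟪r, w⟫_ℝ) ∧ β * ‖q₀‖ ≤ ‖r‖ := by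
  have hS := mul_norm_le_norm_rieszFlip hinfsup
  obtain ⟨p, hp⟩ := surjective_adjoint_comp_self hβ hS r
  refine ⟨rieszFlip b p, fun w => ?_, ?_⟩
  · rw [← inner_adjoint_rieszFlip_apply]
    rw [← hp]
    rfl
  · rw [← hp]
    exact mul_norm_le_norm_adjoint_apply_self hβ.le hS p

theorem exists_solvesSaddlePoint (hα : 0 < α)
    (hcoer : ∀ v : V, (∀ w : Q, b v w = 0) → α * ‖v‖ ^ 2 ≤ a v v) (hβ : 0 < β)
    (hinfsup : ∀ w : Q, ∃ v : V, ‖v‖ ≤ 1 ∧ β * ‖w‖ ≤ b v w) (r : Q) :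
    ∃ qp : V × Q, SolvesSaddlePoint a b r qp := by
  have hS := mul_norm_le_norm_rieszFlip hinfsup
  set Z := ((rieszFlip b)†).ker
  have : CompleteSpace Z := (isClosed_ker _).completeSpace_coe
  obtain ⟨q₀, hq₀, -⟩ := exists_forall_apply_eq_inner hβ hinfsup r
  obtain ⟨z, hzZ, hz⟩ := exists_mem_forall_apply_eq_of_coercive_on Z a hα
    (fun v hv => hcoer v (mem_ker_adjoint_rieszFlip.mp hv)) (-a q₀)
  set q := q₀ + z
  have hqZ : (toDual ℝ V).symm (a q) ∈ Zᗮ := fun v hv => by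
    rw [real_inner_comm, toDual_symm_apply, map_add, add_apply, hz v hv, neg_apply,
      add_neg_cancel]
  rw [← range_eq_orthogonal_ker_adjoint hβ hS] at hqZ
  obtain ⟨p, hp : rieszFlip b p = _⟩ := hqZ
  refine ⟨(q, p), fun v => ?_, fun w => ?_⟩
  · rw [← inner_rieszFlip_apply p v, hp, toDual_symm_apply, sub_self]
  · rw [map_add, add_apply, mem_ker_adjoint_rieszFlip.mp hzZ, add_zero, hq₀]

theorem SolvesSaddlePoint.norm_fst_le (hα : 0 < α)
    (hcoer : ∀ v : V, (∀ w : Q, b v w = 0) → α * ‖v‖ ^ 2 ≤ a v v) (hβ : 0 < β)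
    (hinfsup : ∀ w : Q, ∃ v : V, ‖v‖ ≤ 1 ∧ β * ‖w‖ ≤ b v w) (h : SolvesSaddlePoint a b r qp) :
    ‖qp.1‖ ≤ (1 + ‖a‖ / α) / β * ‖r‖ := by
  obtain ⟨q₀, hq₀, hq₀r⟩ := exists_forall_apply_eq_inner hβ hinfsup r
  set e := qp.1 - q₀ with he_def
  have he : ∀ w, b e w = 0 := fun w => by rw [map_sub, sub_apply, h.2 w, hq₀ w, sub_self]
  have hae : α * ‖e‖ ^ 2 ≤ (-a q₀) e :=
    calc α * ‖e‖ ^ 2 ≤ a (qp.1 - q₀) e := hcoer e he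
      _ = (-a q₀) e := by
        rw [map_sub a, sub_apply, sub_eq_zero.mp (h.1 e), he, zero_sub, neg_apply]
  have hek : α * ‖e‖ ≤ ‖a‖ * ‖q₀‖ := by
    refine (mul_norm_le_opNorm_of_mul_sq_le _ hae).trans ?_
    rw [opNorm_neg]
    exact a.le_opNorm q₀
  have hek' : ‖e‖ ≤ ‖a‖ / α * ‖q₀‖ := by rw [div_mul_eq_mul_div, le_div_iff₀ hα]; linarith
  have hq₀r' : ‖q₀‖ ≤ ‖r‖ / β := by rw [le_div_iff₀ hβ]; linarith
  calc ‖qp.1‖ = ‖q₀ + e‖ := by rw [he_def, add_sub_cancel]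
    _ ≤ ‖q₀‖ + ‖e‖ := norm_add_le _ _
    _ ≤ (1 + ‖a‖ / α) * ‖q₀‖ := by linarith
    _ ≤ (1 + ‖a‖ / α) * (‖r‖ / β) := by gcongr
    _ = (1 + ‖a‖ / α) / β * ‖r‖ := by ring

theorem SolvesSaddlePoint.norm_add_norm_le (hα : 0 < α)
    (hcoer : ∀ v : V, (∀ w : Q, b v w = 0) → α * ‖v‖ ^ 2 ≤ a v v) (hβ : 0 < β)
    (hinfsup : ∀ w : Q, ∃ v : V, ‖v‖ ≤ 1 ∧ β * ‖w‖ ≤ b v w) (h : SolvesSaddlePoint a b r qp) :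
    ‖qp.1‖ + ‖qp.2‖ ≤ (1 + ‖a‖ / α) / β * (1 + ‖a‖ / β) * ‖r‖ := by
  have hq := h.norm_fst_le hα hcoer hβ hinfsup
  have hp : ‖qp.2‖ ≤ ‖a‖ / β * ‖qp.1‖ := by
    rw [div_mul_eq_mul_div, le_div_iff₀ hβ, mul_comm]
    exact h.mul_norm_snd_le hinfsup
  calc ‖qp.1‖ + ‖qp.2‖ ≤ (1 + ‖a‖ / β) * ‖qp.1‖ := by linarith
    _ ≤ (1 + ‖a‖ / β) * ((1 + ‖a‖ / α) / β * ‖r‖) := by gcongr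
    _ = (1 + ‖a‖ / α) / β * (1 + ‖a‖ / β) * ‖r‖ := by ring

theorem SolvesSaddlePoint.unique (hα : 0 < α)
    (hcoer : ∀ v : V, (∀ w : Q, b v w = 0) → α * ‖v‖ ^ 2 ≤ a v v) (hβ : 0 < β)
    (hinfsup : ∀ w : Q, ∃ v : V, ‖v‖ ≤ 1 ∧ β * ‖w‖ ≤ b v w) (h : SolvesSaddlePoint a b r qp)
    (h' : SolvesSaddlePoint a b r qp') : qp = qp' := by
  have hd := (h.sub h').norm_add_norm_le hα hcoer hβ hinfsup
  rw [sub_self, norm_zero, mul_zero, Prod.fst_sub, Prod.snd_sub] at hd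
  have h₁ := norm_nonneg (qp.1 - qp'.1)
  have h₂ := norm_nonneg (qp.2 - qp'.2)
  exact Prod.ext (sub_eq_zero.mp (norm_le_zero_iff.mp (by linarith)))
    (sub_eq_zero.mp (norm_le_zero_iff.mp (by linarith)))

end SaddlePoint

theorem stmt_11_general {V Q : Type*}
    [NormedAddCommGroup V] [InnerProductSpace ℝ V] [CompleteSpace V]
    [NormedAddCommGroup Q] [InnerProductSpace ℝ Q] [CompleteSpace Q]
    (a : V →L[ℝ] V →L[ℝ] ℝ) (b : V →L[ℝ] Q →L[ℝ] ℝ)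
    (α : ℝ) (hα : 0 < α)
    (hcoer : ∀ v : V, (∀ w : Q, b v w = 0) → α * ‖v‖ ^ 2 ≤ a v v)
    (β : ℝ) (hβ : 0 < β)
    (hinfsup : ∀ w : Q, ∃ v : V, ‖v‖ ≤ 1 ∧ β * ‖w‖ ≤ b v w) :
    ∃ C > 0, ∀ r : Q,
      (∃! qp : V × Q,
        (∀ v : V, a qp.1 v - b v qp.2 = 0) ∧ (∀ w : Q, b qp.1 w = (inner ℝ r w : ℝ))) ∧
      (∀ qp : V × Q,
        ((∀ v : V, a qp.1 v - b v qp.2 = 0) ∧ (∀ w : Q, b qp.1 w = (inner ℝ r w : ℝ))) →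
        ‖qp.1‖ + ‖qp.2‖ ≤ C * ‖r‖) := by
  refine ⟨(1 + ‖a‖ / α) / β * (1 + ‖a‖ / β), by positivity, fun r => ⟨?_, fun qp h => ?_⟩⟩
  · obtain ⟨qp, h⟩ := exists_solvesSaddlePoint hα hcoer hβ hinfsup r
    exact ⟨qp, h, fun qp' h' => SolvesSaddlePoint.unique hα hcoer hβ hinfsup h' h⟩
  · exact SolvesSaddlePoint.norm_add_norm_le hα hcoer hβ hinfsup h

/-- Well-posedness of the mixed-dimensional weak formulation, in the abstract
Babuška–Brezzi setting: with `V = H₀(div,𝔅)` and `Q = L²(𝔅)` Hilbert spaces,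
`a(q,v) = (K⁻¹q, v)` continuous, symmetric and coercive on the kernel of
`b(v,w) = (𝔇·v, w)`, and `b` satisfying the inf-sup condition, for every `r ∈ Q` there is a
unique pair `(q, p)` with `a(q,v) − b(v,p) = 0` for all `v` and `b(q,w) = (r,w)` for all
`w`, together with the stability bound `‖q‖ + ‖p‖ ≤ C ‖r‖`. -/
theorem stmt_11 {V Q : Type*}
    [NormedAddCommGroup V] [InnerProductSpace ℝ V] [CompleteSpace V]
    [NormedAddCommGroup Q] [InnerProductSpace ℝ Q] [CompleteSpace Q]
    (a : V →L[ℝ] V →L[ℝ] ℝ) (b : V →L[ℝ] Q →L[ℝ] ℝ)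
    (hsym : ∀ u v : V, a u v = a v u)
    (α : ℝ) (hα : 0 < α)
    (hcoer : ∀ v : V, (∀ w : Q, b v w = 0) → α * ‖v‖ ^ 2 ≤ a v v)
    (β : ℝ) (hβ : 0 < β)
    (hinfsup : ∀ w : Q, ∃ v : V, ‖v‖ ≤ 1 ∧ β * ‖w‖ ≤ b v w) :
    ∃ C > 0, ∀ r : Q,
      (∃! qp : V × Q,
        (∀ v : V, a qp.1 v - b v qp.2 = 0) ∧ (∀ w : Q, b qp.1 w = (inner ℝ r w : ℝ))) ∧
      (∀ qp : V × Q,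
        ((∀ v : V, a qp.1 v - b v qp.2 = 0) ∧ (∀ w : Q, b qp.1 w = (inner ℝ r w : ℝ))) →
        ‖qp.1‖ + ‖qp.2‖ ≤ C * ‖r‖) :=
  stmt_11_general a b α hα hcoer β hβ hinfsup
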